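/- Let f be a quasiperiodically forced circle homeomorphism over an irrational ω with lift F whose fibered rotation number is ρ. Suppose the deviations from the constant rotation are unbounded from above along some orbit: there exists (θ₀,x₀) ∈ T¹×ℝ with sup_{n∈ℕ} (F^n_{θ₀}(x₀) − x₀ − nρ) = +∞. Then for every ε > 0 there exists an integer M ≥ 1 such that for all θ ∈ T¹, x ∈ ℝ and n ∈ ℕ one has (F_ε)^{nM}_θ(x) − x ≥ n(Mρ + 1). In particular, if F_ε has a fibered rotation number ρ₊, then ρ₊ ≥ ρ + 1/M > ρ. -/

import Mathlib

open Filter Topology MeasureTheory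
open scoped ENNReal

noncomputable section

/-- The circle `T¹ = ℝ/ℤ`. -/
abbrev T1 := AddCircle (1 : ℝ)

/-- Fiberwise iterate of the skew product: `fiberIter ω F n θ x = F^n_θ(x)`. -/
def fiberIter (ω : ℝ) (F : T1 → ℝ → ℝ) : ℕ → T1 → ℝ → ℝ
  | 0, _, x => x
  | n + 1, θ, x => fiberIter ω F n (θ + (ω : T1)) (F θ x)

/-- `F` is (the fiber part of) a lift of a quasiperiodically forced circle homeomorphism
over `ω`: `F(θ,x) = (θ+ω, F_θ(x))`, each `F_θ` a strictly increasing homeomorphism of `ℝ`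
commuting with `x ↦ x+1`. -/
structure IsQpfLift (ω : ℝ) (F : T1 → ℝ → ℝ) : Prop where
  cont : Continuous fun p : T1 × ℝ => F p.1 p.2
  mono : ∀ θ, StrictMono (F θ)
  surj : ∀ θ, Function.Surjective (F θ)
  per  : ∀ θ x, F θ (x + 1) = F θ x + 1

/-- `ρ` is the fibered rotation number of the lift `F`. -/
def HasRotNum (ω : ℝ) (F : T1 → ℝ → ℝ) (ρ : ℝ) : Prop :=
  ∀ θ x, Tendsto (fun n : ℕ => (fiberIter ω F n θ x - x) / n) atTop (𝓝 ρ)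

/-!
Pick `δ` so that moving the base point by less than `δ` changes a fiber map by less than `ε`;
then, above any base point closer than `δ` to `θ₀`, the orbit of `F_ε` dominates the orbit of `F`
above `θ₀`. Since the irrational rotation visits the `δ`-ball around `θ₀` from every base point
within a bounded time `K`, every `F_ε`-orbit, after a bounded detour, shadows a long segment of
the orbit above `θ₀` on which `F` gains as much as we like over the rotation `ρ`. This gives an
`M` with `(F_ε)^M_θ(x) ≥ x + Mρ + 1` uniformly in `(θ, x)`, and everything else is iteration.
-/

section FiberIter

variable {ω : ℝ} {G H : T1 → ℝ → ℝ}

theorem fiberIter_succ (n : ℕ) (θ : T1) (x : ℝ) :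
    fiberIter ω G (n + 1) θ x = fiberIter ω G n (θ + (ω : T1)) (G θ x) := rfl

theorem fiberIter_one (θ : T1) (x : ℝ) : fiberIter ω G 1 θ x = G θ x := rfl

theorem fiberIter_add (m n : ℕ) (θ : T1) (x : ℝ) :
    fiberIter ω G (m + n) θ x = fiberIter ω G n (θ + m • (ω : T1)) (fiberIter ω G m θ x) := by
  induction m generalizing θ x with
  | zero => simp [fiberIter]
  | succ m ih =>
    rw [Nat.add_right_comm, fiberIter_succ, ih, fiberIter_succ, succ_nsmul', add_assoc]

theorem monotone_fiberIter (hG : ∀ θ, Monotone (G θ)) (n : ℕ) (θ : T1) :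
    Monotone (fiberIter ω G n θ) := by
  induction n generalizing θ with
  | zero => exact monotone_id
  | succ n ih => exact (ih _).comp (hG θ)

theorem map_add_int (hG : ∀ θ x, G θ (x + 1) = G θ x + 1) (θ : T1) (x : ℝ) (k : ℤ) :
    G θ (x + k) = G θ x + k := by
  have hper : Function.Periodic (fun y => G θ y - y) 1 := fun y => by simp [hG]
  have := hper.int_mul k x
  simp only [mul_one] at this
  linarith

theorem map_eq_map_fract_add_floor (hG : ∀ θ x, G θ (x + 1) = G θ x + 1) (θ : T1) (x : ℝ) :
    G θ x = G θ (Int.fract x) + ⌊x⌋ := by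
  rw [← map_add_int hG, Int.fract_add_floor]

theorem fiberIter_add_int (hG : ∀ θ x, G θ (x + 1) = G θ x + 1) (n : ℕ) (θ : T1) (x : ℝ)
    (k : ℤ) : fiberIter ω G n θ (x + k) = fiberIter ω G n θ x + k := by
  induction n generalizing θ x with
  | zero => rfl
  | succ n ih => rw [fiberIter_succ, fiberIter_succ, map_add_int hG, ih]

theorem fiberIter_sub_sub_one_le (hm : ∀ θ, Monotone (G θ))
    (hp : ∀ θ x, G θ (x + 1) = G θ x + 1) (n : ℕ) (θ : T1) (x y : ℝ) :
    fiberIter ω G n θ y - y - 1 ≤ fiberIter ω G n θ x - x := by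
  have hle : y + ⌊x - y⌋ ≤ x := by linarith [Int.floor_le (x - y)]
  have hmono := monotone_fiberIter (ω := ω) hm n θ hle
  rw [fiberIter_add_int hp] at hmono
  linarith [Int.sub_one_lt_floor (x - y)]

/-- Since the base rotation is an isometry, closeness of the base points is preserved along
the orbits, so a one-step comparison propagates to all iterates. -/
theorem fiberIter_le_fiberIter_of_dist_lt {δ : ℝ} (hH : ∀ θ, Monotone (H θ))
    (hGH : ∀ θ₁ θ₂ y, dist θ₁ θ₂ < δ → G θ₂ y ≤ H θ₁ y) (n : ℕ) {θ₁ θ₂ : T1}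
    (h : dist θ₁ θ₂ < δ) (y : ℝ) :
    fiberIter ω G n θ₂ y ≤ fiberIter ω H n θ₁ y := by
  induction n generalizing θ₁ θ₂ y with
  | zero => exact le_rfl
  | succ n ih =>
    rw [fiberIter_succ, fiberIter_succ]
    exact (ih (by rwa [dist_add_right]) _).trans (monotone_fiberIter hH n _ (hGH θ₁ θ₂ y h))

theorem mul_le_fiberIter_mul_sub {M : ℕ} {c : ℝ} (h : ∀ θ x, x + c ≤ fiberIter ω G M θ x)
    (n : ℕ) (θ : T1) (x : ℝ) : n * c ≤ fiberIter ω G (n * M) θ x - x := by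
  induction n with
  | zero => simp [fiberIter]
  | succ n ih =>
    rw [Nat.succ_mul, fiberIter_add]
    have := h (θ + (n * M) • (ω : T1)) (fiberIter ω G (n * M) θ x)
    push_cast
    linarith

theorem HasRotNum.div_le_of_forall_mul_le {ρ c : ℝ} {M : ℕ} (hρ : HasRotNum ω G ρ)
    (hM : M ≠ 0) {θ : T1} {x : ℝ} (h : ∀ n : ℕ, n * c ≤ fiberIter ω G (n * M) θ x - x) :
    c / M ≤ ρ := by
  have hsub : Tendsto (fun n : ℕ => n * M) atTop atTop :=
    tendsto_id.atTop_mul_const' (Nat.pos_of_ne_zero hM)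
  refine ge_of_tendsto ((hρ θ x).comp hsub) ?_
  filter_upwards [eventually_ne_atTop 0] with n hn
  have hnM : (0 : ℝ) < n * M := by positivity
  rw [Function.comp_apply, Nat.cast_mul, le_div_iff₀ hnM]
  calc c / M * (n * M) = n * c := by field_simp
    _ ≤ _ := h n

theorem exists_forall_le_map_sub (hc : Continuous fun p : T1 × ℝ => G p.1 p.2)
    (hp : ∀ θ x, G θ (x + 1) = G θ x + 1) : ∃ b, ∀ θ x, b ≤ G θ x - x := by
  obtain ⟨b, hb⟩ := (isCompact_univ.prod isCompact_Icc).bddBelow_image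
    (hc.sub continuous_snd).continuousOn (K := (Set.univ : Set T1) ×ˢ Set.Icc (0 : ℝ) 1)
  refine ⟨b, fun θ x => ?_⟩
  have hfract : b ≤ G θ (Int.fract x) - Int.fract x := hb ⟨(θ, Int.fract x),
    ⟨Set.mem_univ _, Int.fract_nonneg x, (Int.fract_lt_one x).le⟩, rfl⟩
  have hx := map_eq_map_fract_add_floor hp θ x
  linarith [Int.fract_add_floor x]

theorem exists_forall_dist_lt_map_le_add (hc : Continuous fun p : T1 × ℝ => G p.1 p.2)
    (hp : ∀ θ x, G θ (x + 1) = G θ x + 1) {ε : ℝ} (hε : 0 < ε) :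
    ∃ δ > 0, ∀ θ₁ θ₂ y, dist θ₁ θ₂ < δ → G θ₂ y ≤ G θ₁ y + ε := by
  obtain ⟨δ, hδ, hunif⟩ := Metric.uniformContinuousOn_iff.mp
    ((isCompact_univ.prod isCompact_Icc).uniformContinuousOn_of_continuous hc.continuousOn
      (s := (Set.univ : Set T1) ×ˢ Set.Icc (0 : ℝ) 1)) ε hε
  refine ⟨δ, hδ, fun θ₁ θ₂ y hθ => ?_⟩
  have hy : Int.fract y ∈ Set.Icc (0 : ℝ) 1 := ⟨Int.fract_nonneg y, (Int.fract_lt_one y).le⟩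
  have hdist : dist (θ₂, Int.fract y) (θ₁, Int.fract y) < δ := by
    rwa [Prod.dist_eq, dist_self, max_eq_left dist_nonneg, dist_comm]
  have hfract := (abs_lt.mp (hunif _ ⟨Set.mem_univ θ₂, hy⟩ _ ⟨Set.mem_univ θ₁, hy⟩ hdist)).2
  rw [map_eq_map_fract_add_floor hp θ₁, map_eq_map_fract_add_floor hp θ₂]
  linarith

end FiberIter

/-- Forward orbits of an irrational rotation are dense, so the open sets of base points whose
`k`-th iterate lies in the ball cover the circle, and compactness bounds the `k` needed. -/
theorem exists_forall_exists_le_dist_add_nsmul_lt {ω : ℝ} (hω : Irrational ω) (θ₀ : T1)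
    {δ : ℝ} (hδ : 0 < δ) : ∃ K : ℕ, ∀ θ : T1, ∃ k ≤ K, dist (θ + k • (ω : T1)) θ₀ < δ := by
  have hdense : DenseRange fun k : ℕ => k • (ω : T1) :=
    denseRange_zsmul_iff_nsmul.mp (AddCircle.denseRange_zsmul_coe_iff.mpr (by simpa using hω))
  obtain ⟨t, ht⟩ := isCompact_univ.elim_finite_subcover
    (fun k : ℕ => {θ : T1 | dist (θ + k • (ω : T1)) θ₀ < δ})
    (fun k => isOpen_lt (by fun_prop) continuous_const)
    (fun θ _ => by
      obtain ⟨k, hk⟩ := hdense.exists_dist_lt (θ₀ - θ) hδ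
      rw [dist_comm, ← dist_add_left θ, add_sub_cancel] at hk
      exact Set.mem_iUnion.mpr ⟨k, hk⟩)
  refine ⟨t.sup id, fun θ => ?_⟩
  obtain ⟨k, hk, hθ⟩ := Set.mem_iUnion₂.mp (ht (Set.mem_univ θ))
  exact ⟨k, Finset.le_sup (f := id) hk, hθ⟩

theorem exists_forall_add_mul_add_one_le_fiberIter_add_const {ω : ℝ} (hω : Irrational ω)
    {F : T1 → ℝ → ℝ} (hF : IsQpfLift ω F) {ρ : ℝ}
    (hunb : ∃ (θ₀ : T1) (x₀ : ℝ), ∀ C : ℝ, ∃ n : ℕ, C < fiberIter ω F n θ₀ x₀ - x₀ - n * ρ)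
    {ε : ℝ} (hε : 0 < ε) :
    ∃ M : ℕ, ∀ θ x, x + M * ρ + 1 ≤ fiberIter ω (fun θ x => F θ x + ε) M θ x := by
  obtain ⟨θ₀, x₀, hunb⟩ := hunb
  have hmono : ∀ θ, Monotone (F θ) := fun θ => (hF.mono θ).monotone
  obtain ⟨δ, hδ, hclose⟩ := exists_forall_dist_lt_map_le_add hF.cont hF.per hε
  have hcompare := fiberIter_le_fiberIter_of_dist_lt (ω := ω)
    (fun θ => (hmono θ).add_const ε) hclose
  obtain ⟨K, hK⟩ := exists_forall_exists_le_dist_add_nsmul_lt hω θ₀ hδ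
  obtain ⟨b, hb⟩ := exists_forall_le_map_sub hF.cont hF.per
  set c := min (b - ρ) 0
  have hshort : ∀ k ≤ K, ∀ θ x,
      x + k * ρ + K * c ≤ fiberIter ω (fun θ x => F θ x + ε) k θ x := by
    intro k hk θ x
    have hF_iter := mul_le_fiberIter_mul_sub (ω := ω) (G := F) (M := 1) (c := b) (fun θ x => by
      rw [fiberIter_one]; linarith [hb θ x]) k θ x
    rw [mul_one] at hF_iter
    have hKk : (K : ℝ) * c ≤ k * c :=
      mul_le_mul_of_nonpos_right (by exact_mod_cast hk) (min_le_right _ _)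
    have hkc : (k : ℝ) * c ≤ k * (b - ρ) :=
      mul_le_mul_of_nonneg_left (min_le_left _ _) k.cast_nonneg
    linarith [hcompare k (θ₁ := θ) (θ₂ := θ) (by rwa [dist_self]) x]
  -- each of the two detours of length at most `K` falls behind the rotation by at most `-K * c`
  obtain ⟨n₀, hn₀⟩ := hunb (2 - 2 * K * c)
  refine ⟨K + n₀, fun θ x => ?_⟩
  obtain ⟨k, hk, hdist⟩ := hK θ
  rw [show K + n₀ = k + n₀ + (K - k) by omega, fiberIter_add, fiberIter_add]
  set x₁ := fiberIter ω (fun θ x => F θ x + ε) k θ x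
  set x₂ := fiberIter ω (fun θ x => F θ x + ε) n₀ (θ + k • (ω : T1)) x₁
  have h₁ := hshort k hk θ x
  have h₂ : x₁ + (fiberIter ω F n₀ θ₀ x₀ - x₀) - 1 ≤ x₂ := by
    linarith [fiberIter_sub_sub_one_le (ω := ω) hmono hF.per n₀ θ₀ x₁ x₀, hcompare n₀ hdist x₁]
  have h₃ := hshort (K - k) (Nat.sub_le K k) (θ + (k + n₀) • (ω : T1)) x₂
  push_cast [Nat.cast_sub hk] at h₃ ⊢
  linarith

theorem rho_unbounded_strictly_monotone_general
    (ω : ℝ) (hω : Irrational ω)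
    (F : T1 → ℝ → ℝ) (hF : IsQpfLift ω F)
    (ρ : ℝ)
    (hunb : ∃ (θ₀ : T1) (x₀ : ℝ), ∀ C : ℝ, ∃ n : ℕ,
      C < fiberIter ω F n θ₀ x₀ - x₀ - n * ρ)
    (ε : ℝ) (hε : 0 < ε) :
    ∃ M : ℕ, 1 ≤ M ∧
      (∀ (θ : T1) (x : ℝ) (n : ℕ),
        (n : ℝ) * ((M : ℝ) * ρ + 1) ≤ fiberIter ω (fun θ x => F θ x + ε) (n * M) θ x - x) ∧
      (∀ ρp : ℝ, HasRotNum ω (fun θ x => F θ x + ε) ρp → ρ + 1 / (M : ℝ) ≤ ρp) := by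
  obtain ⟨M, hM⟩ := exists_forall_add_mul_add_one_le_fiberIter_add_const hω hF hunb hε
  have hM0 : M ≠ 0 := by
    rintro rfl
    have h := hM 0 0
    norm_num [fiberIter] at h
  have hlin := mul_le_fiberIter_mul_sub (c := M * ρ + 1) fun θ x => by linarith [hM θ x]
  refine ⟨M, Nat.one_le_iff_ne_zero.mpr hM0, fun θ x n => hlin n θ x, fun ρp hρp => ?_⟩
  have hdiv := hρp.div_le_of_forall_mul_le hM0 fun n => hlin n 0 0
  rwa [add_div, mul_div_cancel_left₀ ρ (Nat.cast_ne_zero.mpr hM0)] at hdiv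

/-- Lemma 3.1: if the deviations from the constant rotation are
unbounded from above along some orbit, then the rotation number is strictly monotone
from above at `f`. -/
theorem rho_unbounded_strictly_monotone
    (ω : ℝ) (hω : Irrational ω)
    (F : T1 → ℝ → ℝ) (hF : IsQpfLift ω F)
    (ρ : ℝ) (hρ : HasRotNum ω F ρ)
    (hunb : ∃ (θ₀ : T1) (x₀ : ℝ), ∀ C : ℝ, ∃ n : ℕ,
      C < fiberIter ω F n θ₀ x₀ - x₀ - n * ρ)
    (ε : ℝ) (hε : 0 < ε) :
    ∃ M : ℕ, 1 ≤ M ∧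
      (∀ (θ : T1) (x : ℝ) (n : ℕ),
        (n : ℝ) * ((M : ℝ) * ρ + 1) ≤ fiberIter ω (fun θ x => F θ x + ε) (n * M) θ x - x) ∧
      (∀ ρp : ℝ, HasRotNum ω (fun θ x => F θ x + ε) ρp → ρ + 1 / (M : ℝ) ≤ ρp) :=
  rho_unbounded_strictly_monotone_general ω hω F hF ρ hunb ε hε
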